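/- arXiv:2003.06759 — 2 statements merged into one kernel-verified Lean document; each statement's English description precedes it below -/
import Mathlib

section
/- If there exists a vertex v ∈ V(Γ) such that there is no normal-arrow arising from v in the associated directed graph Γ̃, then the graphs Γ and Γ' are isomorphic. -/
/-- Property (*): a bijection `f` between the vertex sets together with, for every vertex `v`,
a fixed isomorphism `φ v` from `Γ − v` onto `Γ' − f v` (encoded as an adjacency-preserving
bijection between the vertex sets with `v`, resp. `f v`, removed). -/
structure RCSetup {V V' : Type*} (G : SimpleGraph V) (G' : SimpleGraph V') where
  f : V ≃ V'
  φ : ∀ v : V, {w : V // w ≠ v} ≃ {w' : V' // w' ≠ f v}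
  adj_iff : ∀ (v : V) (x y : {w : V // w ≠ v}),
    G.Adj x.1 y.1 ↔ G'.Adj (φ v x).1 (φ v y).1

variable {V V' : Type*} {G : SimpleGraph V} {G' : SimpleGraph V'}

/-- There is a normal-arrow `v₁ ⟶ v₂` in the associated directed graph. -/
def RCSetup.Normal (H : RCSetup G G') (v₁ v₂ : V) : Prop :=
  ∃ h : v₂ ≠ v₁, ¬ G.Adj v₁ v₂ ∧ G'.Adj (H.f v₁) (H.φ v₁ ⟨v₂, h⟩).1

/-- There is a dashed-arrow `v₁ ⇢ v₂` in the associated directed graph. -/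
def RCSetup.Dashed (H : RCSetup G G') (v₁ v₂ : V) : Prop :=
  ∃ h : H.f v₂ ≠ H.f v₁, ¬ G'.Adj (H.f v₁) (H.f v₂) ∧ G.Adj v₁ ((H.φ v₁).symm ⟨H.f v₂, h⟩).1

/-!
Deleting a vertex `u` removes `deg u` edges, so `|E(Γ)| - deg u = |E(Γ')| - deg f(u)` for
every `u`. Summing over the `n ≥ 3` vertices gives `(n - 2) |E(Γ)| = (n - 2) |E(Γ')|`, hence
`Γ` and `Γ'` have the same number of edges and `deg f(u) = deg u`. If `v` emits no
normal-arrow, then `φ_v` pulls the neighbours of `f(v)` back to neighbours of `v`; as both sets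
have the same size, `φ_v` matches them exactly, and `φ_v` extended by `v ↦ f(v)` is an
isomorphism `Γ ≅ Γ'`.
-/

open Finset

namespace SimpleGraph

def Iso.extendSubtypeNe [DecidableEq V] [DecidableEq V'] {v : V} {v' : V'}
    (e : {w // w ≠ v} ≃ {w' // w' ≠ v'})
    (he : ∀ a b : {w // w ≠ v}, G.Adj a b ↔ G'.Adj (e a) (e b))
    (hv : ∀ w : {w // w ≠ v}, G.Adj v w ↔ G'.Adj v' (e w)) : G ≃g G' where
  toEquiv := (Equiv.optionSubtypeNe v).symm.trans (e.optionCongr.trans (Equiv.optionSubtypeNe v'))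
  map_rel_iff' {a b} := by
    obtain ⟨a, rfl⟩ := (Equiv.optionSubtypeNe v).surjective a
    obtain ⟨b, rfl⟩ := (Equiv.optionSubtypeNe v).surjective b
    simp only [Equiv.trans_apply, Equiv.symm_apply_apply, Equiv.optionCongr_apply]
    rcases a with _ | a <;> rcases b with _ | b <;> simp [he, hv, adj_comm]

lemma natCard_adj_ne (v : V) [Fintype (G.neighborSet v)] :
    Nat.card {w : {w // w ≠ v} // G.Adj v w} = G.degree v := by
  rw [← card_neighborSet_eq_degree, ← Nat.card_eq_fintype_card]
  exact Nat.card_congr (Equiv.subtypeSubtypeEquivSubtype fun h => (G.ne_of_adj h).symm)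

end SimpleGraph

theorem Equiv.iff_of_imp_of_natCard_le {α β : Type*} [Finite α] (e : α ≃ β) {p : α → Prop}
    {q : β → Prop} (himp : ∀ a, q (e a) → p a)
    (hcard : Nat.card {a // p a} ≤ Nat.card {b // q b}) (a : α) : p a ↔ q (e a) := by
  have hcard' : Nat.card {a // p a} ≤ Nat.card {a // q (e a)} :=
    hcard.trans_eq (Nat.card_congr (e.subtypeEquiv fun _ => Iff.rfl)).symm
  have hset := Set.eq_of_subset_of_ncard_le (s := {a | q (e a)}) (t := {a | p a}) himp hcard'
  exact (Set.ext_iff.mp hset a).symm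

namespace RCSetup

def induceIso (H : RCSetup G G') (v : V) : G.induce {v}ᶜ ≃g G'.induce {H.f v}ᶜ :=
  ⟨H.φ v, (H.adj_iff v _ _).symm⟩

variable [Fintype V] [Fintype V'] [DecidableEq V] [DecidableEq V'] [DecidableRel G.Adj]
  [DecidableRel G'.Adj]

theorem card_edgeFinset_add_degree (H : RCSetup G G') (u : V) :
    #G.edgeFinset + G'.degree (H.f u) = #G'.edgeFinset + G.degree u := by
  have hdel : #G.edgeFinset - G.degree u = #G'.edgeFinset - G'.degree (H.f u) := by
    rw [← SimpleGraph.card_edgeFinset_deleteIncidenceSet,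
      ← SimpleGraph.card_edgeFinset_deleteIncidenceSet,
      ← SimpleGraph.card_edgeFinset_induce_compl_singleton,
      ← SimpleGraph.card_edgeFinset_induce_compl_singleton]
    exact (H.induceIso u).card_edgeFinset_eq
  have := G.degree_le_card_edgeFinset u
  have := G'.degree_le_card_edgeFinset (H.f u)
  omega

theorem card_edgeFinset_eq (H : RCSetup G G') (h3 : 3 ≤ Fintype.card V) :
    #G.edgeFinset = #G'.edgeFinset := by
  have hsum := Finset.sum_congr rfl fun u (_ : u ∈ univ) => H.card_edgeFinset_add_degree u
  simp only [sum_add_distrib, sum_const, card_univ, smul_eq_mul,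
    Equiv.sum_comp H.f fun x => G'.degree x, SimpleGraph.sum_degrees_eq_twice_card_edges] at hsum
  zify at hsum h3
  have hfactor : ((Fintype.card V : ℤ) - 2) * (#G.edgeFinset - #G'.edgeFinset) = 0 := by
    linear_combination hsum
  have := (mul_eq_zero.mp hfactor).resolve_left (by omega)
  omega

theorem degree_f_eq (H : RCSetup G G') (h3 : 3 ≤ Fintype.card V) (u : V) :
    G'.degree (H.f u) = G.degree u := by
  have := H.card_edgeFinset_add_degree u
  rw [H.card_edgeFinset_eq h3] at this
  omega

end RCSetup

theorem stmt_2_general [Fintype V] [Fintype V']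
    (h3 : 3 ≤ Fintype.card V)
    (H : RCSetup G G')
    (h : ∃ v : V, ∀ w : V, ¬ H.Normal v w) :
    Nonempty (G ≃g G') := by
  classical
  obtain ⟨v, hv⟩ := h
  have hnbr : ∀ w : {w // w ≠ v}, G.Adj v w ↔ G'.Adj (H.f v) (H.φ v w) := by
    refine (H.φ v).iff_of_imp_of_natCard_le (p := fun w => G.Adj v w)
      (q := fun w' => G'.Adj (H.f v) w') (fun w hw => ?_) ?_
    · exact not_not.mp fun hn => hv w ⟨w.2, hn, hw⟩
    · rw [SimpleGraph.natCard_adj_ne, SimpleGraph.natCard_adj_ne, H.degree_f_eq h3]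
  exact ⟨SimpleGraph.Iso.extendSubtypeNe (H.φ v) (H.adj_iff v) hnbr⟩

/-- If some vertex `v` has no normal-arrow arising from it in the associated directed graph,
then `Γ ≅ Γ'`. -/
theorem stmt_2 [Fintype V] [Fintype V']
    (h3 : 3 ≤ Fintype.card V) (h3' : 3 ≤ Fintype.card V')
    (H : RCSetup G G')
    (h : ∃ v : V, ∀ w : V, ¬ H.Normal v w) :
    Nonempty (G ≃g G') :=
  stmt_2_general h3 H h
end

section
/- At least one of the following holds for the associated directed graph Γ̃: (I) there exists a vertex v ∈ V(Γ̃) with no normal-arrow arising from v; (II) there exist vertices u, w ∈ V(Γ̃) with normal-arrows u ⟶ w and w ⟶ u; (III) there exists a cycle with alternate normal-arrows and dashed-arrows in Γ̃, and every such cycle is β-type. -/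
variable {V V' : Type*} {G : SimpleGraph V} {G' : SimpleGraph V'}

open Classical

/-- Partial version of `φ v`: defined on every vertex except `v` itself. -/
noncomputable def RCSetup.pphi (H : RCSetup G G') (v x : V) : Option V' :=
  if h : x ≠ v then some (H.φ v ⟨x, h⟩).1 else none

/-- Partial version of `(φ v)⁻¹`: defined on every vertex except `f v` itself. -/
noncomputable def RCSetup.pphiInv (H : RCSetup G G') (v : V) (x' : V') : Option V :=
  if h : x' ≠ H.f v then some ((H.φ v).symm ⟨x', h⟩).1 else none

/-- The `j`-th (partial) map in the alternating composition attached to a cycle `w`: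
`φ_{w j}` if `j` is odd and `φ_{w j}⁻¹` if `j` is even, acting on the disjoint union
`V ⊕ V'`. -/
noncomputable def RCSetup.step (H : RCSetup G G') (w : ℕ → V) (j : ℕ) : V ⊕ V' → Option (V ⊕ V')
  | Sum.inl x => if j % 2 = 1 then (H.pphi (w j) x).map Sum.inr else none
  | Sum.inr x' => if j % 2 = 0 then (H.pphiInv (w j) x').map Sum.inl else none

/-- `chainDown H w lo m z` applies the partial maps `step (lo+m-1), …, step (lo+1), step lo`
to `z`, innermost first (so `step lo` is applied last, i.e. outermost). -/
noncomputable def RCSetup.chainDown (H : RCSetup G G') (w : ℕ → V) (lo : ℕ) :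
    ℕ → Option (V ⊕ V') → Option (V ⊕ V')
  | 0, z => z
  | (m + 1), z => H.chainDown w lo m (z.bind (H.step w (lo + m)))

/-- The innermost argument used to compute the `i`-th term of the sequences attached to a
cycle `w`: `w i` if `i` is even, and `f (w i)` if `i` is odd. -/
noncomputable def RCSetup.inner (H : RCSetup G G') (w : ℕ → V) (i : ℕ) : V ⊕ V' :=
  if i % 2 = 0 then Sum.inl (w i) else Sum.inr (H.f (w i))

/-- The partial sequence `(b'_i)` in `V'` attached to a cycle `w` (starting at `w 1`):
`b'_1 = f (w 1)`, `b'_2 = φ_{w 1}(w 2)`, `b'_3 = φ_{w 1}(φ_{w 2}⁻¹(f (w 3)))`, …;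
a term is `none` whenever some intermediate value is outside the domain of the next map. -/
noncomputable def RCSetup.bSeq' (H : RCSetup G G') (w : ℕ → V) (i : ℕ) : Option V' :=
  match H.chainDown w 1 (i - 1) (some (H.inner w i)) with
  | some (Sum.inr y) => some y
  | _ => none

/-- The partial sequence `(b_i)` in `V` attached to a cycle `w` (starting at `w 1`):
`b_1 = w 2`, `b_2 = φ_{w 2}⁻¹(f (w 3))`, `b_3 = φ_{w 2}⁻¹(φ_{w 3}(w 4))`, …. -/
noncomputable def RCSetup.bSeq (H : RCSetup G G') (w : ℕ → V) (i : ℕ) : Option V :=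
  match H.chainDown w 2 (i - 1) (some (H.inner w (i + 1))) with
  | some (Sum.inl y) => some y
  | _ => none

/-- Cyclic reading of the vertices `v 1, …, v (2k)` of a cycle: `cyc k v m = v m` for
`1 ≤ m ≤ 2k`, extended `2k`-periodically (in particular `cyc k v 0 = v (2k)`). -/
def cyc (k : ℕ) (v : ℕ → V) (m : ℕ) : V := v ((m + 2 * k - 1) % (2 * k) + 1)

/-- The cycle `v 1, …, v (2k)` (with alternate normal- and dashed-arrows) is α-type:
there is `n₀ ≥ 1` such that for every `t = 0, …, k−1`, the sequences `b'^{(2t)}` and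
`b^{(2t+1)}` obtained by starting the cycle at `v (2t+1)` are defined exactly for
`1 ≤ i ≤ n₀`, with `b'^{(2t)}_{n₀} = f (v (2t))` and `b^{(2t+1)}_{n₀} = v (2t+1)`
(indices mod `2k`, `v 0 := v (2k)`). -/
def RCSetup.AlphaType (H : RCSetup G G') (k : ℕ) (v : ℕ → V) : Prop :=
  ∃ n₀ : ℕ, 1 ≤ n₀ ∧ ∀ t : ℕ, t < k →
    (∀ i : ℕ, 1 ≤ i → i ≤ n₀ →
        (H.bSeq' (fun j => cyc k v (2 * t + j)) i).isSome ∧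
        (H.bSeq (fun j => cyc k v (2 * t + j)) i).isSome) ∧
    (∀ i : ℕ, n₀ < i →
        H.bSeq' (fun j => cyc k v (2 * t + j)) i = none ∧
        H.bSeq (fun j => cyc k v (2 * t + j)) i = none) ∧
    H.bSeq' (fun j => cyc k v (2 * t + j)) n₀ = some (H.f (cyc k v (2 * t))) ∧
    H.bSeq (fun j => cyc k v (2 * t + j)) n₀ = some (cyc k v (2 * t + 1))

/-- `v 1, …, v (2k)` is a cycle with alternate normal-arrows and dashed-arrows. -/
def RCSetup.IsAltCycle (H : RCSetup G G') (k : ℕ) (v : ℕ → V) : Prop :=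
  ∀ i : ℕ, 1 ≤ i → i ≤ k →
    H.Normal (cyc k v (2 * i - 1)) (cyc k v (2 * i)) ∧
    H.Dashed (cyc k v (2 * i)) (cyc k v (2 * i + 1))

/-!
Suppose (I) and (II) fail. Since `|V| ≥ 3`, counting the edges of all vertex-deleted subgraphs
gives `deg_Γ v = deg_Γ' (f v)`. Inside `Γ' − f v` the neighbours of `f v` and the `φ_v`-images of
the neighbours of `v` are therefore equinumerous, so a normal-arrow out of `v` (an element of the
first set missing from the second) forces a dashed-arrow out of `v` (an element of the second set
missing from the first). Following a normal- and then a dashed-arrow from vertex to vertex of the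
finite graph eventually closes up into an alternating cycle.

Along an alternating cycle, any two consecutive defined terms of `(b_i)` and of `(b'_i)` are
adjacent in `Γ`, resp. `Γ'`: for `i = 1` this is the pair of arrows `v₁ ⟶ v₂ ⇢ v₃`, and the maps
`φ` preserve adjacency. For an α-type cycle this makes `b'^{(2)}_{n₀-1} = φ_{v₂}(v₁)` adjacent to
`b'^{(2)}_{n₀} = f(v₂)`, which together with `v₁v₂ ∉ E(Γ)` is a normal-arrow `v₂ ⟶ v₁`, so (II)
holds.
-/

open Finset

lemma Function.exists_pos_isPeriodicPt {α : Type*} [Finite α] [Nonempty α] (g : α → α) :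
    ∃ x p, 0 < p ∧ Function.IsPeriodicPt g p x := by
  obtain ⟨m, n, hmn, h⟩ :=
    Finite.exists_ne_map_eq_of_infinite fun n => g^[n] (Classical.arbitrary α)
  wlog hlt : m < n generalizing m n
  · exact this n m hmn.symm h.symm (by omega)
  refine ⟨g^[m] (Classical.arbitrary α), n - m, by omega, ?_⟩
  rw [Function.IsPeriodicPt, Function.IsFixedPt, ← Function.iterate_add_apply,
    Nat.sub_add_cancel hlt.le]
  exact h.symm

lemma SimpleGraph.card_filter_adj_subtype_ne {α : Type*} [Fintype α] (Γ : SimpleGraph α)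
    [DecidableRel Γ.Adj] (a : α) : #{x : {w // w ≠ a} | Γ.Adj a x} = Γ.degree a := by
  rw [← Γ.card_neighborFinset_eq_degree]
  refine Finset.card_nbij (fun x => x.1) (fun x hx => by simpa using hx)
    (fun x _ y _ => Subtype.ext) fun x hx => ?_
  have hx : Γ.Adj a x := by simpa using hx
  exact ⟨⟨x, hx.ne'⟩, by simpa using hx, rfl⟩

lemma cyc_periodic (k : ℕ) (v : ℕ → V) : Function.Periodic (cyc k v) (2 * k) := by
  intro m
  unfold cyc
  rcases k.eq_zero_or_pos with rfl | hk
  · rfl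
  · rw [show m + 2 * k + 2 * k - 1 = m + 2 * k - 1 + 2 * k by omega, Nat.add_mod_right]

lemma cyc_of_pos_of_le {k m : ℕ} (v : ℕ → V) (h₁ : 1 ≤ m) (h₂ : m ≤ 2 * k) : cyc k v m = v m := by
  unfold cyc
  rw [show m + 2 * k - 1 = m - 1 + 2 * k by omega, Nat.add_mod_right,
    Nat.mod_eq_of_lt (by omega), Nat.sub_add_cancel h₁]

lemma cyc_two_mul_mod_add (k : ℕ) (v : ℕ → V) (t j : ℕ) :
    cyc k v (2 * (t % k) + j) = cyc k v (2 * t + j) := by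
  rw [← (cyc_periodic k v).nat_mul (t / k) (2 * (t % k) + j)]
  congr 1
  have := Nat.mod_add_div t k
  linarith

namespace RCSetup

variable (H : RCSetup G G')

lemma chainDown_succ' (w : ℕ → V) (lo m : ℕ) (z : Option (V ⊕ V')) :
    H.chainDown w lo (m + 1) z = (H.chainDown w (lo + 1) m z).bind (H.step w lo) := by
  induction m generalizing z with
  | zero => rfl
  | succ m ih =>
    rw [chainDown, ih, chainDown, Nat.add_right_comm lo 1 m, Nat.add_assoc]

lemma chainDown_add_two (w : ℕ → V) (lo m : ℕ) (z : Option (V ⊕ V')) :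
    H.chainDown w (lo + 2) m z = H.chainDown (fun j => w (2 + j)) lo m z := by
  induction m generalizing z with
  | zero => rfl
  | succ m ih =>
    have hstep : H.step w (lo + 2 + m) = H.step (fun j => w (2 + j)) (lo + m) := by
      funext x
      rcases x with x | x <;>
        simp [step, Nat.add_right_comm lo 2 m, Nat.add_comm 2, Nat.add_mod_right]
    rw [chainDown, chainDown, ih, hstep]

@[simp]
lemma bSeq'_one (w : ℕ → V) : H.bSeq' w 1 = some (H.f (w 1)) := by
  simp [bSeq', chainDown, inner]

@[simp]
lemma bSeq_one (w : ℕ → V) : H.bSeq w 1 = some (w 2) := by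
  simp [bSeq, chainDown, inner]

lemma bSeq'_succ (w : ℕ → V) {i : ℕ} (hi : 1 ≤ i) :
    H.bSeq' w (i + 1) = (H.bSeq w i).bind (H.pphi (w 1)) := by
  obtain ⟨m, rfl⟩ := Nat.exists_eq_add_of_le' hi
  simp only [bSeq', bSeq, Nat.add_sub_cancel, chainDown_succ']
  rcases H.chainDown w (1 + 1) m (some (H.inner w (m + 1 + 1))) with _ | x | x
  · rfl
  · simp only [Option.bind_some, step, if_true]
    cases H.pphi (w 1) x <;> rfl
  · simp [step]

lemma bSeq_succ (w : ℕ → V) {i : ℕ} (hi : 1 ≤ i) :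
    H.bSeq w (i + 1) = (H.bSeq' (fun j => w (2 + j)) i).bind (H.pphiInv (w 2)) := by
  obtain ⟨m, rfl⟩ := Nat.exists_eq_add_of_le' hi
  have hinner : H.inner w (m + 1 + 1 + 1) = H.inner (fun j => w (2 + j)) (m + 1) := by
    show H.inner w ((m + 1) + 2) = _
    simp only [inner, Nat.add_mod_right, Nat.add_comm 2 (m + 1)]
  simp only [bSeq', bSeq, Nat.add_sub_cancel, chainDown_succ', hinner,
    show (2 : ℕ) + 1 = 1 + 2 from rfl, chainDown_add_two]
  rcases H.chainDown (fun j => w (2 + j)) 1 m (some (H.inner (fun j => w (2 + j)) (m + 1)))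
    with _ | x | x
  · rfl
  · simp [step]
  · simp only [Option.bind_some, step, Nat.mod_self, if_true]
    cases H.pphiInv (w 2) x <;> rfl

lemma pphi_eq_some_iff {a x : V} {y : V'} :
    H.pphi a x = some y ↔ ∃ h : x ≠ a, (H.φ a ⟨x, h⟩).1 = y := by
  unfold pphi
  split_ifs with h <;> simp [h]

lemma pphiInv_eq_some_iff {a x : V} {y : V'} : H.pphiInv a y = some x ↔ H.pphi a x = some y := by
  rw [pphi_eq_some_iff]
  unfold pphiInv
  constructor
  · intro h
    split_ifs at h with hy
    cases h
    exact ⟨((H.φ a).symm ⟨y, hy⟩).2, by simp⟩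
  · rintro ⟨hx, rfl⟩
    rw [dif_pos (H.φ a ⟨x, hx⟩).2]
    simp

lemma adj_iff_of_pphi_eq_some {a x y : V} {x' y' : V'} (hx : H.pphi a x = some x')
    (hy : H.pphi a y = some y') : G.Adj x y ↔ G'.Adj x' y' := by
  obtain ⟨hxa, rfl⟩ := H.pphi_eq_some_iff.1 hx
  obtain ⟨hya, rfl⟩ := H.pphi_eq_some_iff.1 hy
  exact H.adj_iff a ⟨x, hxa⟩ ⟨y, hya⟩

lemma normal_iff {a b : V} :
    H.Normal a b ↔ ¬ G.Adj a b ∧ ∃ y, H.pphi a b = some y ∧ G'.Adj (H.f a) y := by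
  simp only [Normal, pphi_eq_some_iff]
  constructor
  · rintro ⟨h, hab, hadj⟩
    exact ⟨hab, _, ⟨h, rfl⟩, hadj⟩
  · rintro ⟨hab, _, ⟨h, rfl⟩, hadj⟩
    exact ⟨h, hab, hadj⟩

lemma adj_of_bind_pphi {a : V} {o₁ o₂ : Option V} (h : ∀ x ∈ o₁, ∀ y ∈ o₂, G.Adj x y) :
    ∀ x' ∈ o₁.bind (H.pphi a), ∀ y' ∈ o₂.bind (H.pphi a), G'.Adj x' y' := by
  simp only [Option.mem_bind_iff]
  rintro x' ⟨x, hx, hxx'⟩ y' ⟨y, hy, hyy'⟩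
  exact (H.adj_iff_of_pphi_eq_some hxx' hyy').1 (h x hx y hy)

lemma adj_of_bind_pphiInv {a : V} {o₁ o₂ : Option V'} (h : ∀ x ∈ o₁, ∀ y ∈ o₂, G'.Adj x y) :
    ∀ x ∈ o₁.bind (H.pphiInv a), ∀ y ∈ o₂.bind (H.pphiInv a), G.Adj x y := by
  simp only [Option.mem_bind_iff]
  rintro x ⟨x', hx', hxx'⟩ y ⟨y', hy', hyy'⟩
  rw [Option.mem_def, pphiInv_eq_some_iff] at hxx' hyy'
  exact (H.adj_iff_of_pphi_eq_some hxx' hyy').2 (h x' hx' y' hy')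

def IsAltWalk (w : ℕ → V) : Prop :=
  ∀ t, H.Normal (w (2 * t + 1)) (w (2 * t + 2)) ∧ H.Dashed (w (2 * t + 2)) (w (2 * t + 3))

variable {H}

lemma Dashed.exists_pphiInv {a b : V} (h : H.Dashed a b) :
    ∃ x, H.pphiInv a (H.f b) = some x ∧ G.Adj a x := by
  obtain ⟨hb, -, hadj⟩ := h
  exact ⟨_, dif_pos hb, hadj⟩

lemma IsAltWalk.shift {w : ℕ → V} (hw : H.IsAltWalk w) : H.IsAltWalk (fun j => w (2 + j)) := by
  intro t
  have h := hw (t + 1)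
  rwa [show 2 * (t + 1) = 2 + 2 * t by ring, Nat.add_assoc, Nat.add_assoc, Nat.add_assoc] at h

theorem IsAltWalk.adj_bSeq {w : ℕ → V} (hw : H.IsAltWalk w) {i : ℕ} (hi : 1 ≤ i) :
    (∀ x ∈ H.bSeq w i, ∀ y ∈ H.bSeq w (i + 1), G.Adj x y) ∧
      ∀ x ∈ H.bSeq' w i, ∀ y ∈ H.bSeq' w (i + 1), G'.Adj x y := by
  induction i, hi using Nat.le_induction generalizing w with
  | base =>
    obtain ⟨hN, hD⟩ := hw 0
    obtain ⟨-, y, hy, hadj'⟩ := H.normal_iff.1 hN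
    obtain ⟨x, hx, hadj⟩ := hD.exists_pphiInv
    rw [H.bSeq_succ w le_rfl, H.bSeq'_succ w le_rfl]
    simp only [Nat.mul_zero, Nat.zero_add] at hy hx hadj hadj'
    simp [hx, hy, hadj, hadj']
  | succ i hi ih =>
    rw [H.bSeq_succ w hi, H.bSeq_succ w (by omega), H.bSeq'_succ w (by omega),
      H.bSeq'_succ w (by omega)]
    exact ⟨H.adj_of_bind_pphiInv (ih hw.shift).2, H.adj_of_bind_pphi (ih hw).1⟩

theorem IsAltWalk.normal_swap {w : ℕ → V} (hw : H.IsAltWalk w) {n : ℕ} (hn : 1 ≤ n)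
    (h : H.bSeq w n = some (w 1)) (h' : H.bSeq' (fun j => w (2 + j)) n = some (H.f (w 2))) :
    H.Normal (w 2) (w 1) := by
  obtain ⟨hab, -⟩ := H.normal_iff.1 (hw 0).1
  obtain ⟨m, rfl⟩ := Nat.exists_eq_add_of_le' hn
  rcases m.eq_zero_or_pos with rfl | hm
  · obtain ⟨h21, -⟩ := (hw 0).1
    simp only [zero_add, bSeq_one, Option.some.injEq] at h
    exact (h21 h).elim
  rw [H.bSeq_succ w hm, Option.bind_eq_some_iff] at h
  obtain ⟨y, hy, hy1⟩ := h
  refine H.normal_iff.2 ⟨fun h => hab h.symm, y, H.pphiInv_eq_some_iff.1 hy1, ?_⟩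
  exact ((hw.shift.adj_bSeq hm).2 y hy _ h').symm

lemma IsAltCycle.isAltWalk {k : ℕ} {v : ℕ → V} (hk : 0 < k) (hc : H.IsAltCycle k v) :
    H.IsAltWalk (cyc k v) := by
  intro t
  have h := hc (t % k + 1) le_add_self (Nat.mod_lt t hk)
  rwa [show 2 * (t % k + 1) + 1 = 2 * (t % k) + 3 by ring,
    show 2 * (t % k + 1) - 1 = 2 * (t % k) + 1 by omega, show 2 * (t % k + 1) = 2 * (t % k) + 2 by ring, cyc_two_mul_mod_add, cyc_two_mul_mod_add,
    cyc_two_mul_mod_add] at h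

lemma IsAltWalk.isAltCycle {k : ℕ} {w : ℕ → V} (hw : H.IsAltWalk w)
    (hwrap : w (2 * k + 1) = w 1) : H.IsAltCycle k w := by
  intro i h₁ h₂
  obtain ⟨t, rfl⟩ := Nat.exists_eq_add_of_le' h₁
  have hlast : cyc k w (2 * (t + 1) + 1) = w (2 * (t + 1) + 1) := by
    rcases h₂.lt_or_eq with h | rfl
    · exact cyc_of_pos_of_le w (by omega) (by omega)
    · rw [hwrap, ← cyc_of_pos_of_le w le_rfl (by omega : 1 ≤ 2 * (t + 1)), ← cyc_periodic _ w 1,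
        Nat.add_comm 1]
  rw [hlast, cyc_of_pos_of_le w (by omega) (by omega), cyc_of_pos_of_le w (by omega) (by omega),
    show 2 * (t + 1) - 1 = 2 * t + 1 by omega, show 2 * (t + 1) = 2 * t + 2 by ring]
  exact hw t

theorem AlphaType.exists_normal_swap {k : ℕ} {v : ℕ → V} (hk : 0 < k) (hc : H.IsAltCycle k v)
    (hα : H.AlphaType k v) : ∃ a b, H.Normal a b ∧ H.Normal b a := by
  obtain ⟨n, hn, hA⟩ := hα
  have h₀ := (hA 0 hk).2.2.2
  simp only [mul_zero, zero_add] at h₀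
  -- the cycle restarted at `v₃`; `1 % k` rather than `1` also covers `k = 1`
  have h₁ := (hA (1 % k) (Nat.mod_lt 1 hk)).2.2.1
  have hv₂ : cyc k v (2 * (1 % k)) = cyc k v 2 := by simpa using cyc_two_mul_mod_add k v 1 0
  simp only [hv₂, cyc_two_mul_mod_add, mul_one] at h₁
  have hw := hc.isAltWalk hk
  exact ⟨_, _, (hw 0).1, hw.normal_swap hn h₀ h₁⟩

variable (H)

def induceComplIso (v : V) : G.induce {v}ᶜ ≃g G'.induce {H.f v}ᶜ where
  toEquiv := H.φ v
  map_rel_iff' := (H.adj_iff v _ _).symm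

lemma degree_f [Fintype V] [Fintype V'] (hV : Fintype.card V ≠ 2) (v : V) :
    G'.degree (H.f v) = G.degree v := by
  have hdel : ∀ v, (#G.edgeFinset : ℤ) - G.degree v = #G'.edgeFinset - G'.degree (H.f v) := by
    intro v
    have h := (H.induceComplIso v).card_edgeFinset_eq
    rw [G.card_edgeFinset_induce_compl_singleton, G'.card_edgeFinset_induce_compl_singleton,
      G.card_edgeFinset_deleteIncidenceSet, G'.card_edgeFinset_deleteIncidenceSet] at h
    have := G.degree_le_card_edgeFinset v
    have := G'.degree_le_card_edgeFinset (H.f v)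
    omega
  have hsum := Finset.sum_congr rfl fun v (_ : v ∈ univ) => hdel v
  simp only [Finset.sum_sub_distrib, Finset.sum_const, card_univ, nsmul_eq_mul] at hsum
  rw [Equiv.sum_comp H.f fun y => (G'.degree y : ℤ), ← Nat.cast_sum, ← Nat.cast_sum,
    G.sum_degrees_eq_twice_card_edges, G'.sum_degrees_eq_twice_card_edges] at hsum
  have hE : (#G.edgeFinset : ℤ) = #G'.edgeFinset := by
    have hV' : (Fintype.card V : ℤ) - 2 ≠ 0 := sub_ne_zero.2 (by exact_mod_cast hV)
    have : ((Fintype.card V : ℤ) - 2) * (#G.edgeFinset - #G'.edgeFinset) = 0 := by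
      push_cast at hsum
      linear_combination hsum
    linarith [(mul_eq_zero.1 this).resolve_left hV']
  have := hdel v
  omega

lemma exists_dashed_of_normal [Fintype V] [Fintype V'] (hV : Fintype.card V ≠ 2) {v u : V}
    (h : H.Normal v u) : ∃ z, H.Dashed v z := by
  set A : Finset {y // y ≠ H.f v} := {y | G'.Adj (H.f v) y}
  set B : Finset {y // y ≠ H.f v} := {y | G.Adj v ((H.φ v).symm y)}
  have hAB : #A = #B := by
    rw [G'.card_filter_adj_subtype_ne, H.degree_f hV, ← G.card_filter_adj_subtype_ne]
    exact Finset.card_equiv (H.φ v) (by simp [B])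
  obtain ⟨hu, hvu, hadj⟩ := h
  have hBA : (B \ A).Nonempty := by
    rw [← Finset.card_pos, ← Finset.card_sdiff_comm hAB, Finset.card_pos]
    exact ⟨H.φ v ⟨u, hu⟩, by simpa [A, B] using ⟨hadj, hvu⟩⟩
  obtain ⟨⟨y, hy⟩, hyB⟩ := hBA
  obtain ⟨z, rfl⟩ := H.f.surjective y
  simp only [Finset.mem_sdiff, Finset.mem_filter, Finset.mem_univ, true_and, A, B] at hyB
  exact ⟨z, hy, hyB.2, hyB.1⟩

lemma exists_isAltCycle [Finite V] [Nonempty V] (h : ∀ x, ∃ y z, H.Normal x y ∧ H.Dashed y z) :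
    ∃ k v, 0 < k ∧ H.IsAltCycle k v := by
  choose nrm dsh hnd using h
  obtain ⟨x, p, hp, hx⟩ := Function.exists_pos_isPeriodicPt dsh
  let w : ℕ → V := fun j => if j % 2 = 1 then dsh^[j / 2] x else nrm (dsh^[j / 2 - 1] x)
  have hodd : ∀ t, w (2 * t + 1) = dsh^[t] x := fun t => by
    simp only [w, if_pos (show (2 * t + 1) % 2 = 1 by omega), show (2 * t + 1) / 2 = t by omega]
  have heven : ∀ t, w (2 * t + 2) = nrm (dsh^[t] x) := fun t => by
    simp only [w, if_neg (show ¬ (2 * t + 2) % 2 = 1 by omega),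
      show (2 * t + 2) / 2 - 1 = t by omega]
  have hw : H.IsAltWalk w := by
    intro t
    rw [hodd, heven, show 2 * t + 3 = 2 * (t + 1) + 1 by ring, hodd, Function.iterate_succ_apply']
    exact hnd _
  refine ⟨p, w, hp, hw.isAltCycle ?_⟩
  rw [hodd, hx.eq]
  exact (hodd 0).symm

end RCSetup

theorem stmt_5_general [Fintype V] [Fintype V']
    (h3 : 3 ≤ Fintype.card V)
    (H : RCSetup G G') :
    (∃ v : V, ∀ w : V, ¬ H.Normal v w) ∨
    (∃ u w : V, H.Normal u w ∧ H.Normal w u) ∨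
    ((∃ (k : ℕ) (v : ℕ → V), 0 < k ∧ H.IsAltCycle k v) ∧
      ∀ (k : ℕ) (v : ℕ → V), 0 < k → H.IsAltCycle k v → ¬ H.AlphaType k v) := by
  by_cases hI : ∃ v : V, ∀ w : V, ¬ H.Normal v w
  · exact Or.inl hI
  by_cases hII : ∃ u w : V, H.Normal u w ∧ H.Normal w u
  · exact Or.inr (Or.inl hII)
  push Not at hI
  have : Nonempty V := Fintype.card_pos_iff.1 (by omega)
  refine Or.inr (Or.inr ⟨H.exists_isAltCycle fun x => ?_,
    fun k v hk hc hα => hII (hα.exists_normal_swap hk hc)⟩)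
  obtain ⟨y, hxy⟩ := hI x
  obtain ⟨_, hyz⟩ := hI y
  obtain ⟨z, hz⟩ := H.exists_dashed_of_normal (by omega) hyz
  exact ⟨y, z, hxy, hz⟩

/-- Trichotomy for the associated directed graph: (I) some vertex has no normal-arrow arising
from it; (II) there are vertices `u, w` with normal-arrows `u ⟶ w` and `w ⟶ u`; or
(III) there exists a cycle with alternate normal-arrows and dashed-arrows, and every such
cycle is β-type (i.e. not α-type). -/
theorem stmt_5 [Fintype V] [Fintype V']
    (h3 : 3 ≤ Fintype.card V) (h3' : 3 ≤ Fintype.card V')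
    (H : RCSetup G G') :
    (∃ v : V, ∀ w : V, ¬ H.Normal v w) ∨
    (∃ u w : V, H.Normal u w ∧ H.Normal w u) ∨
    ((∃ (k : ℕ) (v : ℕ → V), 0 < k ∧ H.IsAltCycle k v) ∧
      ∀ (k : ℕ) (v : ℕ → V), 0 < k → H.IsAltCycle k v → ¬ H.AlphaType k v) :=
  stmt_5_general h3 H
end
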